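/- Let (Ω(S),T) be a minimal substitution dynamical system over a finite alphabet A⊂ℝ, with unique T-invariant Borel probability measure μ. If there exists u∈W(S) starting with a letter e∈C such that uuue∈W(S), then for μ-almost every ω∈Ω(S) the operator H_ω has no eigenvalues (empty point spectrum). -/

import Mathlib

open List Filter Topology MeasureTheory

namespace SubstLR

variable {A : Type*}

/-- Apply the substitution `S` to a finite word. -/
def subst (S : A → List A) (w : List A) : List A := w.flatMap S

/-- `iter S n w` is `S^n(w)`. -/
def iter (S : A → List A) (n : ℕ) (w : List A) : List A := (subst S)^[n] w

/-- The set `W(S)` of finite words associated to `S`. -/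
def WS (S : A → List A) : Set (List A) := {w | ∃ (a : A) (n : ℕ), w <:+: iter S n [a]}

/-- `w` is a finite factor of the two-sided infinite word `ω`. -/
def IsFactor (w : List A) (ω : ℤ → A) : Prop :=
  ∃ k : ℤ, w = (List.range w.length).map fun i => ω (k + i)

/-- The subshift `Ω(S)` associated to `S`. -/
def OmegaS (S : A → List A) : Set (ℤ → A) := {ω | ∀ w, IsFactor w ω → w ∈ WS S}

/-- The set `W(Ω(S))` of finite factors of elements of `Ω(S)`. -/
def WOmega (S : A → List A) : Set (List A) := {w | ∃ ω ∈ OmegaS S, IsFactor w ω}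

/-- Condition (ℓ): `|S^n(e)| → ∞`. -/
def CondL (S : A → List A) (e : A) : Prop :=
  Tendsto (fun n => (iter S n [e]).length) atTop atTop

/-- Condition (o): every letter occurs in some `S^n(e)`. -/
def CondO (S : A → List A) (e : A) : Prop := ∀ a : A, ∃ n : ℕ, a ∈ iter S n [e]

/-- Condition (c): `W(S) = W(Ω(S))`. -/
def CondC (S : A → List A) : Prop := WS S = WOmega S

/-- `(Ω(S),T)` is a substitution dynamical system. -/
def IsSubstSystem (S : A → List A) : Prop := (∃ e, CondL S e ∧ CondO S e) ∧ CondC S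

/-- `v` occurs with bounded gaps in the set of words `W`. -/
def BddGaps (v : List A) (W : Set (List A)) : Prop :=
  ∃ L : ℕ, 0 < L ∧ ∀ w ∈ W, L ≤ w.length → v <:+: w

/-- Condition (BG) for the letter `e`. -/
def BG (S : A → List A) (e : A) : Prop := CondL S e ∧ CondO S e ∧ BddGaps [e] (WS S)

/-- The shift by `k`; `shift 1` is the map `T`. -/
def shift (k : ℤ) (ω : ℤ → A) : ℤ → A := fun n => ω (n + k)

/-- `(Ω(S),T)` is minimal: every orbit is dense in `Ω(S)`. -/
def Minimal [TopologicalSpace A] (S : A → List A) : Prop :=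
  ∀ ω ∈ OmegaS S, OmegaS S ⊆ closure {ω' | ∃ k : ℤ, ω' = shift k ω}

/-- `(Ω(S),T)` is linearly repetitive. -/
def LinRep (S : A → List A) : Prop :=
  ∃ C : ℝ, 0 < C ∧ ∀ v ∈ WS S, ∀ w ∈ WS S, C * v.length ≤ (w.length : ℝ) → v <:+: w

/-- `(Ω(S),T)` is aperiodic. -/
def Aperiodic (S : A → List A) : Prop :=
  ∀ ω ∈ OmegaS S, ∀ k : ℤ, k ≠ 0 → shift k ω ≠ ω

/-- The set `B` of letters `a` with `limsup |S^n(a)| < ∞`. -/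
def Bset (S : A → List A) : Set A := {a | ∃ M : ℕ, ∀ n, (iter S n [a]).length ≤ M}

/-- The set `C = A ∖ B`. -/
def Cset (S : A → List A) : Set A := (Bset S)ᶜ

open Classical in
/-- `tilde S w` is the word obtained from `w` by deleting all letters of `B`. -/
noncomputable def tilde (S : A → List A) (w : List A) : List A :=
  w.filter fun x => decide (x ∈ Cset S)

/-- The induced substitution `S̃`. -/
noncomputable def tildeS (S : A → List A) : A → List A := fun x => tilde S (S x)

/-!
Gordon's argument. By minimality every word of `W(S)` recurs with bounded gaps, and
desubstituting `n` times shows that `S^n(uuue) = wwws`, with `w = S^n(u)` and `s = S^n(e)`,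
recurs with gaps `O(|s|)`, while `|s| → ∞` because `e ∈ C`. An occurrence of `wwws` covering
`[-|w|, 2|w|]` makes `ω` `|w|`-periodic there, and each occurrence provides `|s|` such shifts;
by invariance of `μ` this local periodicity has probability at least a fixed `δ > 0` for every
`n`, hence `ω` has arbitrarily long such periods with probability `≥ δ`. That event is shift invariant, so unique
ergodicity gives it full measure. Finally, for such a potential the transfer matrix `B` over
one period is unimodular, so `B² = tr B • B - 1` and the solution vectors `Φ` satisfy
`‖Φ c‖ ≤ ‖Φ (c - p)‖ + ‖Φ (c + p)‖ + ‖Φ (c + 2p)‖` for arbitrarily large `p`, which forces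
`Φ c = 0` when `ψ ∈ ℓ²`.
-/

open scoped ENNReal ProbabilityTheory

section Windows

def window (ω : ℤ → A) (a : ℤ) (ℓ : ℕ) : List A := (List.range ℓ).map fun i : ℕ => ω (a + i)

def OccursAt (v : List A) (ω : ℤ → A) (q : ℤ) : Prop := window ω q v.length = v

@[simp] theorem length_window (ω : ℤ → A) (a : ℤ) (ℓ : ℕ) : (window ω a ℓ).length = ℓ := by
  simp [window]

theorem window_add (ω : ℤ → A) (a : ℤ) (m n : ℕ) :
    window ω a (m + n) = window ω a m ++ window ω (a + m) n := by
  simp only [window, List.range_add, List.map_append, List.map_map]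
  congr 1
  refine List.map_congr_left fun i _ => ?_
  simp only [Function.comp_apply, Nat.cast_add, add_assoc]

theorem isFactor_iff_exists_occursAt {v : List A} {ω : ℤ → A} :
    IsFactor v ω ↔ ∃ q, OccursAt v ω q := by
  simp only [IsFactor, OccursAt, window, eq_comm (a := v), pure_def, bind_eq_flatMap,
    ← List.map_eq_flatMap, List.map_map]
  rfl

theorem occursAt_iff_getElem {v : List A} {ω : ℤ → A} {q : ℤ} :
    OccursAt v ω q ↔ ∀ (i : ℕ) (h : i < v.length), ω (q + i) = v[i] := by
  simp [OccursAt, List.ext_getElem_iff, window]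

theorem occursAt_window (ω : ℤ → A) (a : ℤ) (ℓ : ℕ) : OccursAt (window ω a ℓ) ω a := by
  rw [OccursAt, length_window]

theorem occursAt_shift {v : List A} {ω : ℤ → A} {q k : ℤ} :
    OccursAt v (shift k ω) q ↔ OccursAt v ω (q + k) := by
  simp only [occursAt_iff_getElem, shift, add_right_comm]

theorem isFactor_shift {w : List A} {ω : ℤ → A} (k : ℤ) :
    IsFactor w (shift k ω) ↔ IsFactor w ω := by
  simp only [isFactor_iff_exists_occursAt, occursAt_shift]
  exact ⟨fun ⟨q, hq⟩ => ⟨q + k, hq⟩, fun ⟨q, hq⟩ => ⟨q - k, by rwa [sub_add_cancel]⟩⟩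

theorem OccursAt.exists_of_infix {v W : List A} {ω : ℤ → A} {s : ℤ} (hW : OccursAt W ω s)
    (hv : v <:+: W) : ∃ q, OccursAt v ω q ∧ s ≤ q ∧ q + v.length ≤ s + W.length := by
  obtain ⟨L, R, rfl⟩ := hv
  refine ⟨s + L.length, ?_, by omega, by simp; omega⟩
  unfold OccursAt at hW ⊢
  simp only [List.length_append, window_add] at hW
  exact (List.append_inj (List.append_inj hW (by simp)).1 (by simp)).2

theorem OccursAt.infix_of_le {v W : List A} {ω : ℤ → A} {s t : ℤ} (hW : OccursAt W ω s)
    (hv : OccursAt v ω t) (h₁ : s ≤ t) (h₂ : t + v.length ≤ s + W.length) : v <:+: W := by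
  refine ⟨window ω s (t - s).toNat,
    window ω (t + v.length) (s + W.length - t - v.length).toNat, ?_⟩
  have hlen : W.length = (t - s).toNat + (v.length + (s + W.length - t - v.length).toNat) := by
    omega
  have hstart : s + (((t - s).toNat : ℕ) : ℤ) = t := by omega
  unfold OccursAt at hW hv
  conv_rhs => rw [← hW, hlen, window_add, window_add, hstart, hv, ← List.append_assoc]

end Windows

section Substitution

variable (S : A → List A)

theorem iter_add (m n : ℕ) (w : List A) : iter S (m + n) w = iter S m (iter S n w) :=
  Function.iterate_add_apply _ _ _ _

theorem iter_append (n : ℕ) (x y : List A) : iter S n (x ++ y) = iter S n x ++ iter S n y := by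
  induction n with
  | zero => rfl
  | succ n ih =>
    simp only [iter, Function.iterate_succ_apply'] at ih ⊢
    rw [ih, subst, List.flatMap_append]
    rfl

theorem iter_infix (n : ℕ) {x y : List A} (h : x <:+: y) : iter S n x <:+: iter S n y := by
  obtain ⟨l, r, rfl⟩ := h
  rw [iter_append, iter_append]
  exact ⟨iter S n l, iter S n r, rfl⟩

theorem iter_eq_flatMap (n : ℕ) (w : List A) : iter S n w = w.flatMap fun a => iter S n [a] := by
  induction w with
  | nil => exact Function.iterate_fixed rfl n
  | cons a w ih => rw [← List.singleton_append, iter_append, List.flatMap_append, ih]; simp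

theorem length_flatMap_le {α β : Type*} (f : α → List β) {k : ℕ} (hk : ∀ a, (f a).length ≤ k)
    (Y : List α) : (Y.flatMap f).length ≤ k * Y.length := by
  induction Y with
  | nil => simp
  | cons a Y ih => rw [List.flatMap_cons, List.length_append, List.length_cons]; linarith [hk a]

theorem exists_length_iter_le_pow [Finite A] :
    ∃ K, 0 < K ∧ ∀ n w, (iter S n w).length ≤ K ^ n * w.length := by
  obtain ⟨K, hK⟩ := Finite.bddAbove_range fun a => (S a).length
  refine ⟨K + 1, K.succ_pos, fun n w => ?_⟩
  induction n with
  | zero => simp [iter]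
  | succ n ih =>
    rw [iter, Function.iterate_succ_apply', pow_succ', mul_assoc]
    exact (length_flatMap_le S (fun a => (hK ⟨a, rfl⟩).trans K.le_succ) _).trans
      (Nat.mul_le_mul_left _ ih)

variable {S}

theorem mem_WS_of_infix {w w' : List A} (h : w' <:+: w) (hw : w ∈ WS S) : w' ∈ WS S := by
  obtain ⟨a, n, hn⟩ := hw
  exact ⟨a, n, h.trans hn⟩

theorem iter_singleton_mem_WS (a : A) (n : ℕ) : iter S n [a] ∈ WS S := ⟨a, n, List.infix_refl _⟩

theorem exists_lt_length_iter {e : A} (he : e ∈ Cset S) (M : ℕ) :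
    ∃ n, M < (iter S n [e]).length := by
  by_contra! h
  exact he ⟨M, h⟩

theorem shift_mem_OmegaS {ω : ℤ → A} (h : ω ∈ OmegaS S) (k : ℤ) : shift k ω ∈ OmegaS S :=
  fun w hw => h w ((isFactor_shift k).1 hw)

theorem window_mem_WS {ω : ℤ → A} (h : ω ∈ OmegaS S) (a : ℤ) (ℓ : ℕ) : window ω a ℓ ∈ WS S :=
  h _ (isFactor_iff_exists_occursAt.2 ⟨a, occursAt_window ω a ℓ⟩)

theorem exists_mem_OmegaS_occursAt (hC : CondC S) {W : List A} (hW : W ∈ WS S) (q : ℤ) :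
    ∃ η ∈ OmegaS S, OccursAt W η q := by
  rw [hC] at hW
  obtain ⟨ω, hω, hfac⟩ := hW
  obtain ⟨q', hq'⟩ := isFactor_iff_exists_occursAt.1 hfac
  exact ⟨shift (q' - q) ω, shift_mem_OmegaS hω _, occursAt_shift.2 (by rwa [add_sub_cancel])⟩

theorem exists_infix_iter_of_mem_WS [Finite A] (hC : CondC S) {W : List A} (hW : W ∈ WS S)
    (n : ℕ) : ∃ Y ∈ WS S, W <:+: iter S n Y := by
  obtain ⟨K, hK, hlen⟩ := exists_length_iter_le_pow S
  obtain ⟨η, hη, hWη⟩ := exists_mem_OmegaS_occursAt hC hW 0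
  set L := max W.length (K ^ n + 1)
  have hWL : W <:+: window η 0 L := (occursAt_window η 0 L).infix_of_le hWη le_rfl (by simp [L])
  obtain ⟨a, m, hm⟩ := window_mem_WS hη 0 L
  have hnm : n ≤ m := by
    by_contra! h
    have := hm.length_le.trans (hlen m [a])
    have := Nat.pow_le_pow_right hK h.le
    simp only [length_window, List.length_singleton, mul_one, L] at *
    omega
  refine ⟨iter S (m - n) [a], iter_singleton_mem_WS a _, ?_⟩
  rw [← iter_add, Nat.add_sub_cancel' hnm]
  exact hWL.trans hm

end Substitution

section Desubstitution

variable {α β : Type*} (f : α → List β) {k : ℕ} (hk : ∀ a, (f a).length ≤ k)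
include hk

theorem exists_suffix_flatMap_suffix {Y : List α} {L M : List β} (h : Y.flatMap f = L ++ M) :
    ∃ Y', Y' <:+ Y ∧ Y'.flatMap f <:+ M ∧ M.length ≤ (Y'.flatMap f).length + k := by
  induction Y generalizing L with
  | nil =>
    obtain rfl : M = [] := (List.append_eq_nil_iff.1 h.symm).2
    exact ⟨[], List.nil_suffix, List.nil_suffix, by simp⟩
  | cons a Y ih =>
    rw [List.flatMap_cons] at h
    rcases List.append_eq_append_iff.1 h with ⟨a', -, ha⟩ | ⟨c', hc₁, hc₂⟩
    · obtain ⟨Y', h₁, h₂, h₃⟩ := ih ha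
      exact ⟨Y', h₁.trans (List.suffix_cons a Y), h₂, h₃⟩
    · refine ⟨Y, List.suffix_cons a Y, ⟨c', hc₂.symm⟩, ?_⟩
      have := congrArg List.length hc₁
      have := congrArg List.length hc₂
      simp only [List.length_append] at *
      linarith [hk a]

theorem exists_prefix_flatMap_prefix {Y : List α} {M R : List β} (h : Y.flatMap f = M ++ R) :
    ∃ Y', Y' <+: Y ∧ Y'.flatMap f <+: M ∧ M.length ≤ (Y'.flatMap f).length + k := by
  induction Y generalizing M with
  | nil =>
    obtain rfl : M = [] := (List.append_eq_nil_iff.1 h.symm).1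
    exact ⟨[], List.nil_prefix, List.nil_prefix, by simp⟩
  | cons a Y ih =>
    rw [List.flatMap_cons] at h
    rcases List.append_eq_append_iff.1 h with ⟨a', rfl, ha⟩ | ⟨c', hc₁, -⟩
    · obtain ⟨Y', h₁, ⟨t, rfl⟩, h₃⟩ := ih ha
      refine ⟨a :: Y', List.cons_prefix_cons.2 ⟨rfl, h₁⟩, ⟨t, by simp⟩, ?_⟩
      simp only [List.flatMap_cons, List.length_append] at *
      omega
    · refine ⟨[], List.nil_prefix, List.nil_prefix, ?_⟩
      have := congrArg List.length hc₁
      simp only [List.length_append] at this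
      simp only [List.flatMap_nil, List.length_nil]
      linarith [hk a]

theorem exists_infix_flatMap_infix {Y : List α} {W : List β} (hW : W <:+: Y.flatMap f) :
    ∃ Z, Z <:+: Y ∧ Z.flatMap f <:+: W ∧ W.length ≤ (Z.length + 2) * k := by
  obtain ⟨L, R, hLR⟩ := hW
  obtain ⟨Y₁, hY₁, ⟨P, hP⟩, hY₁len⟩ :=
    exists_suffix_flatMap_suffix f hk (Y := Y) (L := L) (M := W ++ R)
      (by rw [← hLR, List.append_assoc])
  rcases List.append_eq_append_iff.1 hP with ⟨a', rfl, ha⟩ | ⟨c', rfl, hc⟩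
  · obtain ⟨Z, hZ, ⟨t, ht⟩, hZlen⟩ := exists_prefix_flatMap_prefix f hk ha
    refine ⟨Z, hZ.isInfix.trans hY₁.isInfix, ⟨P, t, by rw [← ht, List.append_assoc]⟩, ?_⟩
    have := congrArg List.length hP
    have := length_flatMap_le f hk Z
    simp only [List.length_append] at *
    nlinarith
  · refine ⟨[], List.nil_infix, List.nil_infix, ?_⟩
    have := congrArg List.length hc
    simp only [List.length_append, List.length_nil] at *
    omega

end Desubstitution

section Recurrence

variable [TopologicalSpace A] [DiscreteTopology A] {S : A → List A}

theorem isClopen_setOf_occursAt (v : List A) (q : ℤ) :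
    IsClopen {ω : ℤ → A | OccursAt v ω q} := by
  have : {ω : ℤ → A | OccursAt v ω q} =
      ⋂ i : Fin v.length, (fun ω : ℤ → A => ω (q + i)) ⁻¹' {v[i]} := by
    ext ω
    simp [occursAt_iff_getElem, Fin.forall_iff]
  rw [this]
  exact isClopen_iInter_of_finite fun i => (isClopen_discrete _).preimage (continuous_apply _)

theorem isClosed_OmegaS (S : A → List A) : IsClosed (OmegaS S) := by
  have : OmegaS S = ⋂ (w : List A) (q : ℤ), {ω : ℤ → A | OccursAt w ω q → w ∈ WS S} := by
    ext ω
    simp [OmegaS, isFactor_iff_exists_occursAt]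
  rw [this]
  refine isClosed_iInter fun w => isClosed_iInter fun q => ?_
  by_cases hw : w ∈ WS S
  · simp [hw]
  · simp only [hw, imp_false]
    exact (isClopen_setOf_occursAt w q).compl.isClosed

theorem Minimal.isFactor (hmin : Minimal S) {η : ℤ → A} (hη : η ∈ OmegaS S) {w : List A}
    (hw : w ∈ WOmega S) : IsFactor w η := by
  obtain ⟨ω, hω, hfac⟩ := hw
  obtain ⟨q, hq⟩ := isFactor_iff_exists_occursAt.1 hfac
  obtain ⟨_, hocc, k, rfl⟩ :=
    mem_closure_iff.1 (hmin η hη hω) _ (isClopen_setOf_occursAt w q).isOpen hq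
  exact isFactor_iff_exists_occursAt.2 ⟨q + k, occursAt_shift.1 hocc⟩

/-- If long words of `W(S)` avoided `w`, a compactness argument would produce a point of `Ω(S)`
avoiding `w` altogether, which minimality forbids. -/
theorem bddGaps_of_minimal [Finite A] (hC : CondC S) (hmin : Minimal S) {w : List A}
    (hw : w ∈ WS S) : BddGaps w (WS S) := by
  by_contra hgap
  simp only [BddGaps, not_exists, not_and, not_forall] at hgap
  set K : ℕ → Set (ℤ → A) := fun R =>
    OmegaS S ∩ ⋂ t ∈ Set.Icc (-(R : ℤ)) R, {η | ¬ OccursAt w η t}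
  have hK_closed (R : ℕ) : IsClosed (K R) := (isClosed_OmegaS S).inter <|
    isClosed_biInter fun t _ => (isClopen_setOf_occursAt w t).isOpen.isClosed_compl
  have hK_anti (R : ℕ) : K (R + 1) ⊆ K R := Set.inter_subset_inter_right _ <|
    Set.biInter_subset_biInter_left (Set.Icc_subset_Icc (by omega) (by omega))
  have hK_nonempty (R : ℕ) : (K R).Nonempty := by
    obtain ⟨W, hW, hWlen, hwW⟩ := hgap (2 * R + w.length + 1) (by omega)
    obtain ⟨η, hη, hWη⟩ := exists_mem_OmegaS_occursAt hC hW (-R)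
    refine ⟨η, hη, Set.mem_iInter₂.2 fun t ht hwη => hwW (hWη.infix_of_le hwη ht.1 ?_)⟩
    have := ht.2
    omega
  obtain ⟨η, hη⟩ := IsCompact.nonempty_iInter_of_sequence_nonempty_isCompact_isClosed K hK_anti
    hK_nonempty (hK_closed 0).isCompact hK_closed
  obtain ⟨t, ht⟩ := isFactor_iff_exists_occursAt.1
    (hmin.isFactor (Set.mem_iInter.1 hη 0).1 (hC ▸ hw))
  exact Set.mem_iInter₂.1 (Set.mem_iInter.1 hη t.natAbs).2 t ⟨by omega, by omega⟩ ht

variable [Finite A]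

theorem exists_length_iter_le_mul (hC : CondC S) (hmin : Minimal S) {e : A} (he : e ∈ Cset S) :
    ∃ C, 0 < C ∧ ∀ n a, (iter S n [a]).length ≤ C * (iter S n [e]).length := by
  have hocc (a : A) : ∃ m, [a] <:+: iter S m [e] := by
    obtain ⟨R, -, hR⟩ := bddGaps_of_minimal hC hmin (iter_singleton_mem_WS (S := S) a 0)
    obtain ⟨m, hm⟩ := exists_lt_length_iter he R
    exact ⟨m, hR _ (iter_singleton_mem_WS e m) hm.le⟩
  choose m hm using hocc
  obtain ⟨M, hM⟩ := Finite.bddAbove_range m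
  obtain ⟨K, hK, hlen⟩ := exists_length_iter_le_pow S
  refine ⟨K ^ M, pow_pos hK M, fun n a => ?_⟩
  calc (iter S n [a]).length ≤ (iter S (m a) (iter S n [e])).length := by
        rw [← iter_add, add_comm, iter_add]
        exact (iter_infix S n (hm a)).length_le
    _ ≤ K ^ m a * (iter S n [e]).length := hlen _ _
    _ ≤ K ^ M * (iter S n [e]).length :=
        Nat.mul_le_mul_right _ (Nat.pow_le_pow_right hK (hM ⟨a, rfl⟩))

/-- Desubstitute `W` `n` times and use the bounded gaps of `x`. -/
theorem exists_iter_infix_of_length_le (hC : CondC S) (hmin : Minimal S) {x : List A}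
    (hx : x ∈ WS S) : ∃ R : ℕ, ∀ n k : ℕ, 0 < k → (∀ a, (iter S n [a]).length ≤ k) →
      ∀ W ∈ WS S, (R + 2) * k ≤ W.length → iter S n x <:+: W := by
  obtain ⟨R, -, hR⟩ := bddGaps_of_minimal hC hmin hx
  refine ⟨R, fun n k hk₀ hk W hW hWlen => ?_⟩
  obtain ⟨Y, hY, hWY⟩ := exists_infix_iter_of_mem_WS hC hW n
  rw [iter_eq_flatMap] at hWY
  obtain ⟨Z, hZY, hZW, hZlen⟩ := exists_infix_flatMap_infix _ hk hWY
  have hRZ : R ≤ Z.length :=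
    Nat.le_of_add_le_add_right (Nat.le_of_mul_le_mul_right (hWlen.trans hZlen) hk₀)
  calc iter S n x <:+: iter S n Z := iter_infix S n (hR Z (mem_WS_of_infix hZY hY) hRZ)
    _ = Z.flatMap fun a => iter S n [a] := iter_eq_flatMap S n Z
    _ <:+: W := hZW

theorem exists_cube_infix (hC : CondC S) (hmin : Minimal S) {e : A} (he : e ∈ Cset S)
    {u : List A} (hhead : u.head? = some e) (hcube : u ++ u ++ u ++ [e] ∈ WS S) :
    ∃ K : ℕ, 0 < K ∧ ∀ N : ℕ, ∃ w s : List A, s <+: w ∧ N ≤ s.length ∧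
      ∀ W ∈ WS S, K * s.length ≤ W.length → w ++ w ++ w ++ s <:+: W := by
  obtain ⟨C, hC₀, hCe⟩ := exists_length_iter_le_mul hC hmin he
  obtain ⟨R, hR⟩ := exists_iter_infix_of_length_le hC hmin hcube
  obtain ⟨u', rfl⟩ := List.head?_eq_some_iff.1 hhead
  refine ⟨(R + 2) * C, by positivity, fun N => ?_⟩
  obtain ⟨n, hn⟩ := exists_lt_length_iter he N
  refine ⟨iter S n (e :: u'), iter S n [e], ?_, hn.le, fun W hW hWlen => ?_⟩
  · rw [show e :: u' = [e] ++ u' from rfl, iter_append]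
    exact List.prefix_append _ _
  · simpa only [iter_append] using
      hR n _ (Nat.mul_pos hC₀ (by omega)) (hCe n) W hW (by rwa [← mul_assoc])

end Recurrence

section Periodicity

variable {β : Type*}

/-- `ω` is `p`-periodic on `[c - p, c + 2p]`. -/
def PeriodicNear (ω : ℤ → β) (c : ℤ) (p : ℕ) : Prop :=
  ∀ m : ℤ, c - p ≤ m → m ≤ c + p → ω (m + p) = ω m

def IsGordon (ω : ℤ → β) : Prop := ∃ c : ℤ, ∃ᶠ p in atTop, PeriodicNear ω c p

theorem PeriodicNear.comp {γ : Type*} (g : β → γ) {ω : ℤ → β} {c : ℤ} {p : ℕ}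
    (h : PeriodicNear ω c p) : PeriodicNear (g ∘ ω) c p :=
  fun m h₁ h₂ => congrArg g (h m h₁ h₂)

theorem IsGordon.comp {γ : Type*} (g : β → γ) {ω : ℤ → β} (h : IsGordon ω) : IsGordon (g ∘ ω) :=
  let ⟨c, hc⟩ := h
  ⟨c, hc.mono fun _ hp => hp.comp g⟩

theorem periodicNear_shift {ω : ℤ → β} {k c : ℤ} {p : ℕ} :
    PeriodicNear (shift k ω) c p ↔ PeriodicNear ω (c + k) p := by
  constructor
  · intro h m h₁ h₂
    simpa [shift, add_right_comm] using h (m - k) (by omega) (by omega)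
  · intro h m h₁ h₂
    simpa [shift, add_right_comm] using h (m + k) (by omega) (by omega)

theorem isGordon_shift (k : ℤ) {ω : ℤ → β} : IsGordon (shift k ω) ↔ IsGordon ω := by
  simp only [IsGordon, periodicNear_shift]
  exact ⟨fun ⟨c, h⟩ => ⟨c + k, h⟩, fun ⟨c, h⟩ => ⟨c - k, by rwa [sub_add_cancel]⟩⟩

theorem setOf_isGordon_eq :
    {ω : ℤ → β | IsGordon ω} = ⋃ c : ℤ, limsup (fun p => {ω | PeriodicNear ω c p}) atTop := by
  ext ω
  simp [IsGordon, mem_limsup_iff_frequently_mem]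

theorem isClosed_setOf_periodicNear [TopologicalSpace β] [T2Space β] (c : ℤ) (p : ℕ) :
    IsClosed {ω : ℤ → β | PeriodicNear ω c p} := by
  simp only [PeriodicNear, Set.ofPred_forall]
  exact isClosed_iInter fun m => isClosed_iInter fun _ => isClosed_iInter fun _ =>
    isClosed_eq (continuous_apply _) (continuous_apply _)

theorem getElem_cube_add {w s : List β} (hs : s <+: w) {i : ℕ}
    (hi : i + w.length < (w ++ w ++ w ++ s).length) :
    (w ++ w ++ w ++ s)[i + w.length] = (w ++ w ++ w ++ s)[i]'(by omega) := by
  have hpre : w ++ w ++ s <+: w ++ w ++ w ++ s := by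
    simpa only [List.append_assoc, List.prefix_append_right_inj] using
      hs.trans (List.prefix_append w s)
  rw [← hpre.getElem (show i < (w ++ w ++ s).length by simp at hi ⊢; omega)]
  simp [List.getElem_append_right]

theorem periodicNear_of_occursAt_cube {w s : List β} (hs : s <+: w) {ω : ℤ → β} {q c : ℤ}
    (hocc : OccursAt (w ++ w ++ w ++ s) ω q) (h₁ : q ≤ c - w.length)
    (h₂ : c + 1 ≤ q + w.length + s.length) : PeriodicNear ω c w.length := by
  intro m hm₁ hm₂
  have hlen : (w ++ w ++ w ++ s).length = 3 * w.length + s.length := by simp; ring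
  have hi : (m - q).toNat + w.length < (w ++ w ++ w ++ s).length := by omega
  have e₁ := occursAt_iff_getElem.1 hocc _ hi
  have e₀ := occursAt_iff_getElem.1 hocc (m - q).toNat (by omega)
  rw [getElem_cube_add hs hi, ← e₀] at e₁
  convert e₁ using 2 <;> push_cast <;> omega

end Periodicity

section Ergodic

open ProbabilityTheory

variable {α : Type*} [MeasurableSpace α] {μ : Measure α} {f : α → α}

theorem natCast_le_mul_measure_of_visits [IsProbabilityMeasure μ] (hf : MeasurePreserving f μ μ)
    {B : Set α} (hB : MeasurableSet B) {s D : ℕ}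
    (h : ∀ᵐ x ∂μ, ∃ k₀, k₀ + s ≤ D ∧ ∀ j < s, f^[k₀ + j] x ∈ B) : (s : ℝ≥0∞) ≤ D * μ B := by
  have hvisits : ∀ᵐ x ∂μ, (s : ℝ≥0∞) ≤ ∑ k ∈ Finset.range D, B.indicator 1 (f^[k] x) := by
    filter_upwards [h] with x ⟨k₀, hk₀, hvisit⟩
    calc (s : ℝ≥0∞) = ∑ j ∈ Finset.range s, B.indicator 1 (f^[k₀ + j] x) := by
          rw [Finset.sum_congr rfl fun j hj => Set.indicator_of_mem
            (hvisit j (Finset.mem_range.1 hj)) 1]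
          simp
      _ = ∑ k ∈ Finset.Ico k₀ (k₀ + s), B.indicator 1 (f^[k] x) := by
          rw [Finset.sum_Ico_eq_sum_range, Nat.add_sub_cancel_left]
      _ ≤ ∑ k ∈ Finset.range D, B.indicator 1 (f^[k] x) :=
          Finset.sum_le_sum_of_subset fun k hk => by
            simp only [Finset.mem_Ico, Finset.mem_range] at hk ⊢
            omega
  have hind : Measurable (B.indicator (1 : α → ℝ≥0∞)) := measurable_one.indicator hB
  calc (s : ℝ≥0∞) = ∫⁻ _, (s : ℝ≥0∞) ∂μ := by simp
    _ ≤ ∫⁻ x, ∑ k ∈ Finset.range D, B.indicator 1 (f^[k] x) ∂μ := lintegral_mono_ae hvisits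
    _ = ∑ k ∈ Finset.range D, ∫⁻ x, B.indicator 1 (f^[k] x) ∂μ :=
        lintegral_finsetSum _ fun k _ => hind.comp (hf.iterate k).measurable
    _ = D * μ B := by
        simp [(hf.iterate _).lintegral_comp hind, lintegral_indicator_one hB]

theorem le_measure_limsup_atTop [IsFiniteMeasure μ] {E : ℕ → Set α}
    (hE : ∀ i, MeasurableSet (E i)) {δ : ℝ≥0∞} (hδ : ∀ i, δ ≤ μ (E i)) :
    δ ≤ μ (limsup E atTop) := by
  simp only [limsup_eq_iInf_iSup_of_nat, Set.iInf_eq_iInter, Set.iSup_eq_iUnion]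
  refine ge_of_tendsto' (tendsto_measure_iInter_atTop
    (fun n => (MeasurableSet.biUnion (Set.to_countable _) fun i _ => hE i).nullMeasurableSet)
    (fun m n hmn => Set.biUnion_mono (fun i hi => le_trans hmn hi) fun _ _ => subset_rfl)
    ⟨0, measure_ne_top _ _⟩) fun n => (hδ n).trans (measure_mono ?_)
  exact Set.subset_biUnion_of_mem (u := E) (le_refl n)

/-- Unique ergodicity implies ergodicity: conditioning `μ` on an invariant set of positive
measure gives another invariant probability measure carried by `Ω`. -/
theorem measure_eq_one_of_preimage_eq [IsProbabilityMeasure μ] (hf : MeasurePreserving f μ μ)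
    {Ω : Set α} (hΩ : ∀ᵐ x ∂μ, x ∈ Ω)
    (huniq : ∀ ν : Measure α, IsProbabilityMeasure ν → ν Ω = 1 → ν.map f = ν → ν = μ)
    {G : Set α} (hG : MeasurableSet G) (hGinv : f ⁻¹' G = G) (hG₀ : μ G ≠ 0) : μ G = 1 := by
  have hprob : IsProbabilityMeasure μ[|G] := cond_isProbabilityMeasure hG₀
  have hΩG : μ[Ω|G] = 1 := by
    rw [cond_apply hG, measure_inter_conull (t := Ω) (mem_ae_iff.1 hΩ)]
    exact ENNReal.inv_mul_cancel hG₀ (measure_ne_top _ _)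
  have hinv : (μ[|G]).map f = μ[|G] := by
    have := (hf.restrict_preimage hG).map_eq
    rw [hGinv] at this
    rw [ProbabilityTheory.cond, Measure.map_smul, this]
  rw [← huniq _ hprob hΩG hinv, cond_apply_self hG₀ (measure_ne_top _ _)]

end Ergodic

section ShiftInvariantMeasures

theorem iterate_shift_one (k : ℕ) : (shift 1 : (ℤ → A) → ℤ → A)^[k] = shift k := by
  induction k with
  | zero => funext ω n; simp [shift]
  | succ k ih =>
    rw [Function.iterate_succ', ih]
    funext ω n
    simp only [Function.comp_apply, shift, Nat.cast_succ, add_assoc, add_comm (1 : ℤ)]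

variable [MeasurableSpace A]

theorem measurable_shift (k : ℤ) : Measurable (shift k : (ℤ → A) → ℤ → A) :=
  measurable_pi_lambda _ fun n => measurable_pi_apply (n + k)

variable [TopologicalSpace A] [DiscreteTopology A] [OpensMeasurableSpace (ℤ → A)]
  {S : A → List A} {μ : Measure (ℤ → A)} [IsProbabilityMeasure μ]

theorem measurableSet_setOf_isGordon : MeasurableSet {ω : ℤ → A | IsGordon ω} := by
  rw [setOf_isGordon_eq]
  exact .iUnion fun c => .measurableSet_limsup fun p =>
    (isClosed_setOf_periodicNear c p).measurableSet

/-- An occurrence of `wwws` at `-|w| - j` with `j < |s|` makes `ω` `|w|`-periodic near `0`, and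
every window of length `D` yields `|s|` consecutive shifts with such an occurrence. -/
theorem natCast_le_mul_measure_periodicNear (hμ : MeasurePreserving (shift 1) μ μ)
    (hΩ : ∀ᵐ ω ∂μ, ω ∈ OmegaS S) {w s : List A} (hs : s <+: w) {D : ℕ}
    (hD : ∀ W ∈ WS S, D ≤ W.length → w ++ w ++ w ++ s <:+: W) :
    (s.length : ℝ≥0∞) ≤ D * μ {ω | PeriodicNear ω 0 w.length} := by
  set v := w ++ w ++ w ++ s
  set B := {ω : ℤ → A | ∃ j < s.length, OccursAt v ω (-w.length - j)}
  have hB : MeasurableSet B := by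
    have : B = ⋃ j ∈ Finset.range s.length, {ω | OccursAt v ω (-w.length - j)} := by
      ext
      simp [B]
    rw [this]
    exact Finset.measurableSet_biUnion _ fun j _ =>
      (isClopen_setOf_occursAt v _).isClosed.measurableSet
  have hBper : B ⊆ {ω | PeriodicNear ω 0 w.length} := fun ω ⟨j, hj, hocc⟩ =>
    periodicNear_of_occursAt_cube hs hocc (by omega) (by omega)
  refine (natCast_le_mul_measure_of_visits hμ hB ?_).trans (by gcongr)
  filter_upwards [hΩ] with ω hω
  obtain ⟨q, hq, hq₁, hq₂⟩ := (occursAt_window ω (-w.length) D).exists_of_infix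
    (hD _ (window_mem_WS hω _ _) (length_window ..).ge)
  refine ⟨(q + w.length).toNat, ?_, fun j hj => ⟨j, hj, ?_⟩⟩
  · simp only [v, List.length_append, length_window] at hq₂
    omega
  · rw [iterate_shift_one, occursAt_shift]
    convert hq using 2
    omega

theorem measure_setOf_isGordon_pos [Finite A] (hC : CondC S) (hmin : Minimal S)
    (hμ : MeasurePreserving (shift 1) μ μ) (hΩ : ∀ᵐ ω ∂μ, ω ∈ OmegaS S) {e : A}
    (he : e ∈ Cset S) {u : List A} (hhead : u.head? = some e)
    (hcube : u ++ u ++ u ++ [e] ∈ WS S) : 0 < μ {ω | IsGordon ω} := by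
  obtain ⟨K, hK, hcubes⟩ := exists_cube_infix hC hmin he hhead hcube
  choose w s hs hlen hinfix using fun N : ℕ => hcubes (N + 1)
  set P : ℕ → Set (ℤ → A) := fun N => {ω | PeriodicNear ω 0 (w N).length}
  have hP (N : ℕ) : (K : ℝ≥0∞)⁻¹ ≤ μ (P N) := by
    have h := natCast_le_mul_measure_periodicNear hμ hΩ (hs N) (hinfix N)
    rw [Nat.cast_mul, mul_comm (K : ℝ≥0∞), mul_assoc] at h
    have hs₀ : ((s N).length : ℝ≥0∞) ≠ 0 := Nat.cast_ne_zero.2 (by have := hlen N; omega)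
    have h₁ : (1 : ℝ≥0∞) ≤ K * μ (P N) := by
      rwa [← ENNReal.mul_le_mul_iff_right hs₀ (ENNReal.natCast_ne_top _), mul_one]
    exact (ENNReal.inv_le_iff_le_mul (fun h => by simp at h) (fun h => by simp at h)).2 h₁
  have hPG : limsup P atTop ⊆ {ω | IsGordon ω} := fun ω hω =>
    ⟨0, (tendsto_atTop_mono (f := id)
      (fun N => show N ≤ (w N).length by have := hlen N; have := (hs N).length_le; omega)
      tendsto_id).frequently (mem_limsup_iff_frequently_mem.1 hω)⟩
  calc (0 : ℝ≥0∞) < (K : ℝ≥0∞)⁻¹ := ENNReal.inv_pos.2 (ENNReal.natCast_ne_top K)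
    _ ≤ μ (limsup P atTop) :=
        le_measure_limsup_atTop (fun N => (isClosed_setOf_periodicNear _ _).measurableSet) hP
    _ ≤ μ {ω | IsGordon ω} := measure_mono hPG

end ShiftInvariantMeasures

section Gordon

open scoped Matrix

variable {𝕜 : Type*} [NormedField 𝕜] {V : ℤ → 𝕜} {E : 𝕜} {ψ : ℤ → 𝕜}

def transferMatrix (V : ℤ → 𝕜) (E : 𝕜) (n : ℤ) : Matrix (Fin 2) (Fin 2) 𝕜 := !![E - V n, -1; 1, 0]

def transferProd (V : ℤ → 𝕜) (E : 𝕜) (j : ℤ) : ℕ → Matrix (Fin 2) (Fin 2) 𝕜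
  | 0 => 1
  | k + 1 => transferMatrix V E (j + k + 1) * transferProd V E j k

def solVec (ψ : ℤ → 𝕜) (n : ℤ) : Fin 2 → 𝕜 := ![ψ (n + 1), ψ n]

theorem det_transferProd (j : ℤ) (k : ℕ) : (transferProd V E j k).det = 1 := by
  induction k with
  | zero => simp [transferProd]
  | succ k ih =>
    rw [transferProd, Matrix.det_mul, ih, transferMatrix, Matrix.det_fin_two_of]
    ring

theorem transferProd_congr {j j' : ℤ} {k : ℕ}
    (h : ∀ i : ℕ, 1 ≤ i → i ≤ k → V (j + i) = V (j' + i)) :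
    transferProd V E j k = transferProd V E j' k := by
  induction k with
  | zero => rfl
  | succ k ih =>
    have hk := h (k + 1) (by omega) le_rfl
    push_cast at hk
    simp only [transferProd, transferMatrix, ← add_assoc] at hk ⊢
    rw [hk, ih fun i h₁ h₂ => h i h₁ (by omega)]

theorem mul_self_eq_trace_smul_sub_one {R : Type*} [CommRing R] [Nontrivial R]
    {M : Matrix (Fin 2) (Fin 2) R} (h : M.det = 1) : M * M = M.trace • M - 1 := by
  have hM := M.aeval_self_charpoly
  simp only [Matrix.charpoly_fin_two, h, map_add, map_sub, map_pow, map_mul, Polynomial.aeval_X,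
    Polynomial.aeval_C, map_one, Algebra.algebraMap_eq_smul_one, smul_mul_assoc, one_mul] at hM
  rw [← sub_eq_zero, ← hM, sq]
  abel

theorem mulVec_mulVec_add_eq_smul {R n : Type*} [CommRing R] [Fintype n] [DecidableEq n]
    {B : Matrix n n R} {t : R} (hB : B * B = t • B - 1) (x : n → R) :
    B *ᵥ (B *ᵥ x) + x = t • (B *ᵥ x) := by
  rw [Matrix.mulVec_mulVec, hB, Matrix.sub_mulVec, Matrix.smul_mulVec, Matrix.one_mulVec,
    sub_add_cancel]

/-- Whether `‖t‖ ≤ 1` or not, one of the two relations bounds `‖y₁‖`. -/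
theorem norm_le_add_of_add_eq_smul {F : Type*} [SeminormedAddCommGroup F] [NormedSpace 𝕜 F]
    {t : 𝕜} {y₀ y₁ y₂ y₃ : F} (h₁ : y₂ + y₀ = t • y₁) (h₂ : y₃ + y₁ = t • y₂) :
    ‖y₁‖ ≤ ‖y₀‖ + ‖y₂‖ + ‖y₃‖ := by
  rcases le_or_gt ‖t‖ 1 with ht | ht
  · calc ‖y₁‖ = ‖t • y₂ - y₃‖ := by rw [← h₂, add_sub_cancel_left]
      _ ≤ ‖t‖ * ‖y₂‖ + ‖y₃‖ := by rw [← norm_smul]; exact norm_sub_le _ _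
      _ ≤ ‖y₀‖ + ‖y₂‖ + ‖y₃‖ := by nlinarith [norm_nonneg y₂, norm_nonneg y₀]
  · calc ‖y₁‖ ≤ ‖t‖ * ‖y₁‖ := le_mul_of_one_le_left (norm_nonneg _) ht.le
      _ = ‖y₂ + y₀‖ := by rw [h₁, norm_smul]
      _ ≤ ‖y₀‖ + ‖y₂‖ + ‖y₃‖ := by linarith [norm_add_le y₂ y₀, norm_nonneg y₃]

variable (heq : ∀ n : ℤ, ψ (n + 1) + ψ (n - 1) + V n * ψ n = E * ψ n)
include heq

theorem solVec_add (j : ℤ) (k : ℕ) : solVec ψ (j + k) = transferProd V E j k *ᵥ solVec ψ j := by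
  induction k with
  | zero => simp [transferProd]
  | succ k ih =>
    have hstep := heq (j + k + 1)
    rw [add_sub_cancel_right] at hstep
    rw [transferProd, ← Matrix.mulVec_mulVec, ← ih, Nat.cast_succ, ← add_assoc]
    ext i
    fin_cases i
    · simp [solVec, transferMatrix, Matrix.mulVec, dotProduct]
      linear_combination hstep
    · simp [solVec, transferMatrix, Matrix.mulVec, dotProduct]

theorem eq_zero_of_solVec_eq_zero {a : ℤ} (h : solVec ψ a = 0) : ψ = 0 := by
  have hvec (n : ℤ) : ψ (n + 1) = 0 ∧ ψ n = 0 := by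
    induction n using Int.inductionOn' (b := a) with
    | zero => simpa [solVec] using congrFun h
    | succ n _ ih =>
      refine ⟨?_, ih.1⟩
      have := heq (n + 1)
      rw [add_sub_cancel_right, ih.1, ih.2] at this
      linear_combination this
    | pred n _ ih =>
      refine ⟨by simpa using ih.2, ?_⟩
      have := heq n
      rw [ih.1, ih.2] at this
      linear_combination this
  funext n
  exact (hvec n).2

theorem norm_solVec_le_of_periodicNear {c : ℤ} {p : ℕ} (hV : PeriodicNear V c p) :
    ‖solVec ψ c‖ ≤ ‖solVec ψ (c - p)‖ + ‖solVec ψ (c + p)‖ + ‖solVec ψ (c + 2 * p)‖ := by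
  set B := transferProd V E c p
  have hB : B * B = B.trace • B - 1 := mul_self_eq_trace_smul_sub_one (det_transferProd c p)
  have h₀ : solVec ψ c = B *ᵥ solVec ψ (c - p) := by
    have hB₀ : transferProd V E (c - p) p = B := transferProd_congr fun i _ _ => by
      rw [← hV (c - p + i) (by omega) (by omega)]
      ring_nf
    rw [← hB₀, ← solVec_add heq, sub_add_cancel]
  have h₁ : solVec ψ (c + p) = B *ᵥ solVec ψ c := solVec_add heq c p
  have h₂ : solVec ψ (c + 2 * p) = B *ᵥ solVec ψ (c + p) := by
    have hB₂ : transferProd V E (c + p) p = B := transferProd_congr fun i _ _ => by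
      rw [← hV (c + i) (by omega) (by omega)]
      ring_nf
    rw [← hB₂, ← solVec_add heq, add_assoc, ← two_mul]
  refine norm_le_add_of_add_eq_smul (t := B.trace) ?_ ?_
  · rw [h₁, h₀]
    exact mulVec_mulVec_add_eq_smul hB _
  · rw [h₂, h₁]
    exact mulVec_mulVec_add_eq_smul hB _

theorem eq_zero_of_isGordon (hV : IsGordon V) (hψ : Tendsto ψ cofinite (𝓝 0)) : ψ = 0 := by
  obtain ⟨c, hc⟩ := hV
  have hsol : Tendsto (solVec ψ) cofinite (𝓝 0) := by
    refine tendsto_pi_nhds.2 fun i => ?_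
    fin_cases i
    · exact hψ.comp (add_left_injective 1).tendsto_cofinite
    · exact hψ
  have hfar {g : ℕ → ℤ} (hg : g.Injective) : Tendsto (fun p => ‖solVec ψ (g p)‖) atTop (𝓝 0) :=
    tendsto_zero_iff_norm_tendsto_zero.1 <|
      hsol.comp (hg.tendsto_cofinite.mono_left Nat.cofinite_eq_atTop.ge)
  have hlim := ((hfar (g := fun p => c - p) fun p q h => by simpa using h).add
    (hfar (g := fun p => c + p) fun p q h => by simpa using h)).add
    (hfar (g := fun p => c + 2 * p) fun p q h => by simpa using h)
  simp only [add_zero] at hlim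
  have hc₀ : ‖solVec ψ c‖ ≤ 0 :=
    ge_of_tendsto_of_frequently hlim (hc.mono fun p hp => norm_solVec_le_of_periodicNear heq hp)
  exact eq_zero_of_solVec_eq_zero heq (norm_le_zero_iff.1 hc₀)

end Gordon

theorem tendsto_cofinite_zero_of_memℓp {ι F : Type*} [NormedAddCommGroup F] {p : ℝ≥0∞}
    {f : ι → F} (hf : Memℓp f p) (hp : 0 < p.toReal) : Tendsto f cofinite (𝓝 0) := by
  rw [tendsto_zero_iff_norm_tendsto_zero]
  have h := (hf.summable hp).tendsto_cofinite_zero.rpow_const (p := p.toReal⁻¹)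
    (Or.inr (inv_nonneg.2 hp.le))
  rw [Real.zero_rpow (inv_ne_zero hp.ne')] at h
  exact h.congr fun i => Real.rpow_rpow_inv (norm_nonneg _) hp.ne'

theorem statement9_general (𝒜 : Finset ℝ) (S : 𝒜 → List 𝒜) (hS : IsSubstSystem S)
    (hmin : Minimal S) (μ : Measure (ℤ → 𝒜)) (hprob : IsProbabilityMeasure μ)
    (hsupp : μ (OmegaS S) = 1) (hinv : μ.map (shift 1) = μ)
    (huniq : ∀ ν : Measure (ℤ → 𝒜), IsProbabilityMeasure ν → ν (OmegaS S) = 1 →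
      ν.map (shift 1) = ν → ν = μ)
    (u : List 𝒜) (e : 𝒜) (he : e ∈ Cset S) (hhead : u.head? = some e)
    (hcube : u ++ u ++ u ++ [e] ∈ WS S) :
    ∀ᵐ ω ∂μ, ∀ E : ℝ, ∀ ψ : ℤ → ℂ, Memℓp ψ 2 →
      (∀ n : ℤ, ψ (n + 1) + ψ (n - 1) + ((ω n : ℝ) : ℂ) * ψ n = (E : ℂ) * ψ n) →
      ψ = 0 := by
  have hμ : MeasurePreserving (shift 1) μ μ := ⟨measurable_shift 1, hinv⟩
  have hΩ : ∀ᵐ ω ∂μ, ω ∈ OmegaS S :=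
    (ae_mem_iff_measure_eq (isClosed_OmegaS S).measurableSet.nullMeasurableSet).2
      (by rw [hsupp, measure_univ])
  have hG : μ {ω | IsGordon ω} = 1 :=
    measure_eq_one_of_preimage_eq hμ hΩ huniq measurableSet_setOf_isGordon
      (Set.ext fun _ => isGordon_shift 1)
      (measure_setOf_isGordon_pos hS.2 hmin hμ hΩ he hhead hcube).ne'
  filter_upwards [(ae_mem_iff_measure_eq measurableSet_setOf_isGordon.nullMeasurableSet).2
    (by rw [hG, measure_univ])] with ω hω E ψ hψ heq
  exact eq_zero_of_isGordon heq (hω.comp fun a : 𝒜 => ((a : ℝ) : ℂ))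
    (tendsto_cofinite_zero_of_memℓp hψ (by norm_num))

/-- for a minimal substitution dynamical system over `A ⊂ ℝ` with unique
invariant measure `μ`, if some `u ∈ W(S)` starts with a letter `e ∈ C` and `uuue ∈ W(S)`,
then `H_ω` has no eigenvalues for `μ`-a.e. `ω`. -/
theorem statement9 (𝒜 : Finset ℝ) (S : 𝒜 → List 𝒜) (hS : IsSubstSystem S)
    (hmin : Minimal S) (μ : Measure (ℤ → 𝒜)) (hprob : IsProbabilityMeasure μ)
    (hsupp : μ (OmegaS S) = 1) (hinv : μ.map (shift 1) = μ)
    (huniq : ∀ ν : Measure (ℤ → 𝒜), IsProbabilityMeasure ν → ν (OmegaS S) = 1 →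
      ν.map (shift 1) = ν → ν = μ)
    (u : List 𝒜) (e : 𝒜) (hu : u ∈ WS S) (he : e ∈ Cset S) (hhead : u.head? = some e)
    (hcube : u ++ u ++ u ++ [e] ∈ WS S) :
    ∀ᵐ ω ∂μ, ∀ E : ℝ, ∀ ψ : ℤ → ℂ, Memℓp ψ 2 →
      (∀ n : ℤ, ψ (n + 1) + ψ (n - 1) + ((ω n : ℝ) : ℂ) * ψ n = (E : ℂ) * ψ n) →
      ψ = 0 :=
  statement9_general 𝒜 S hS hmin μ hprob hsupp hinv huniq u e he hhead hcube

end SubstLR
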